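/- Let p be an odd prime, 𝒬 a quadratic form on 𝔽_p^n given by 𝒬[x] = xᵀMx for a symmetric matrix M over 𝔽_p, and ℒ a linear form on 𝔽_p^n. Let V = ker(M) be the radical of 𝒬 and r the rank of M. Then the Gauss sum G_p(𝒬, ℒ) = Σ_{t ∈ 𝔽_p^n} e_p(𝒬[t] + ℒ(t)) vanishes unless ℒ restricted to V is zero, in which case |G_p(𝒬, ℒ)| = p^{n - r/2}. -/

import Mathlib

open Complex

/-- `e_p(z) = e^{2πi z̃ /p}` for `z : ZMod p`. -/
noncomputable def ePZMod (p : ℕ) (z : ZMod p) : ℂ :=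
  Complex.exp (2 * Real.pi * Complex.I * (z.val : ℂ) / p)

/-!
Write `Q t = tᵀ M t + L t`. Expanding `|G|² = G · conj G` and substituting `t = u + h`, the symmetry
of `M` gives `Q (u + h) - Q u = Q h + u ⬝ (2 M h)`, so the inner sum over `u` is an orthogonality
sum of the primitive character `ψ = e_p`: it is `p ^ n` if `2 M h = 0` and `0` otherwise. As `2` is
invertible only `h ∈ ker M` survive, and there `Q h = L h`, so `|G|² = p ^ n Σ_{h ∈ ker M} ψ (L h)`.
This character sum over `ker M` vanishes unless `L` vanishes on `ker M`, in which case it is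
`|ker M| = p ^ (n - r)`.
-/

open Finset Matrix ComplexConjugate

lemma ePZMod_eq_stdAddChar (p : ℕ) [NeZero p] : ePZMod p = ZMod.stdAddChar := by
  funext z
  rw [ZMod.stdAddChar_apply, ZMod.toCircle_apply]
  rfl

namespace AddChar

variable {R : Type*} [CommRing R] {ψ : AddChar R ℂ}

lemma sum_dotProduct_eq_ite [Fintype R] {ι : Type*} [Fintype ι] [DecidableEq ι]
    (hψ : ψ.IsPrimitive) (w : ι → R) [Decidable (w = 0)] :
    ∑ u : ι → R, ψ (u ⬝ᵥ w) = if w = 0 then (Fintype.card R : ℂ) ^ Fintype.card ι else 0 := by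
  split_ifs with hw
  · simp [hw]
  obtain ⟨i, hi⟩ := Function.ne_iff.1 hw
  obtain ⟨x, hx⟩ := ne_one_iff.1 (hψ hi)
  let φ : AddChar (ι → R) ℂ :=
    ψ.compAddMonoidHom (AddMonoidHom.mk' (· ⬝ᵥ w) fun a b ↦ add_dotProduct a b w)
  refine sum_eq_zero_of_ne_one (ψ := φ) (ne_one_iff.2 ⟨Pi.single i x, ?_⟩)
  simpa [φ, mul_comm] using hx

lemma sum_submodule_eq_zero_of_map_ne_zero {V : Type*} [AddCommGroup V] [Module R V]
    {K : Submodule R V} [Fintype K] (hψ : ψ.IsPrimitive) {L : V →ₗ[R] R} {v : V} (hvK : v ∈ K)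
    (hv : L v ≠ 0) :
    ∑ h : K, ψ (L h) = 0 := by
  obtain ⟨x, hx⟩ := ne_one_iff.1 (hψ hv)
  refine sum_eq_zero_of_ne_one (ψ := ψ.compAddMonoidHom (L.comp K.subtype).toAddMonoidHom)
    (ne_one_iff.2 ⟨⟨x • v, K.smul_mem x hvK⟩, ?_⟩)
  simpa [mul_comm] using hx

end AddChar

lemma Matrix.IsSymm.dotProduct_mulVec_add {R ι : Type*} [CommSemiring R] [Fintype ι]
    {M : Matrix ι ι R} (hM : M.IsSymm) (u h : ι → R) :
    (u + h) ⬝ᵥ M *ᵥ (u + h) = u ⬝ᵥ M *ᵥ u + h ⬝ᵥ M *ᵥ h + u ⬝ᵥ (2 : R) • M *ᵥ h := by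
  have hcomm : h ⬝ᵥ M *ᵥ u = u ⬝ᵥ M *ᵥ h := by
    rw [dotProduct_mulVec, ← mulVec_transpose, hM.eq, dotProduct_comm]
  simp only [mulVec_add, dotProduct_add, add_dotProduct, hcomm, dotProduct_smul, smul_eq_mul]
  ring

noncomputable def quadraticGaussSum {R ι : Type*} [CommSemiring R] [Fintype R] [Fintype ι]
    [DecidableEq ι] (ψ : AddChar R ℂ) (M : Matrix ι ι R) (L : (ι → R) →ₗ[R] R) : ℂ :=
  ∑ t, ψ (t ⬝ᵥ M *ᵥ t + L t)

theorem quadraticGaussSum_mul_conj {R ι : Type*} [CommRing R] [Fintype R] [Fintype ι]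
    [DecidableEq ι] {ψ : AddChar R ℂ} (hψ : ψ.IsPrimitive)
    (h2 : IsUnit (2 : R)) {M : Matrix ι ι R} (hM : M.IsSymm) (L : (ι → R) →ₗ[R] R)
    [Fintype (LinearMap.ker M.mulVecLin)] :
    quadraticGaussSum ψ M L * conj (quadraticGaussSum ψ M L) =
      (Fintype.card R : ℂ) ^ Fintype.card ι * ∑ h : LinearMap.ker M.mulVecLin, ψ (L h) := by
  classical
  set Q : (ι → R) → R := fun t ↦ t ⬝ᵥ M *ᵥ t + L t
  have hshift (u h : ι → R) : Q (u + h) - Q u = Q h + u ⬝ᵥ (2 : R) • M *ᵥ h := by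
    simp only [Q, hM.dotProduct_mulVec_add, map_add]
    ring
  calc quadraticGaussSum ψ M L * conj (quadraticGaussSum ψ M L)
      = ∑ u, ∑ h, ψ (Q (u + h) - Q u) := by
        rw [quadraticGaussSum, map_sum, sum_mul_sum, sum_comm]
        simp only [← AddChar.map_neg_eq_conj, ← AddChar.map_add_eq_mul, ← sub_eq_add_neg]
        exact sum_congr rfl fun u _ ↦ (Fintype.sum_equiv (Equiv.addLeft u) _ _ fun _ ↦ rfl).symm
    _ = ∑ h, ψ (Q h) * ∑ u, ψ (u ⬝ᵥ (2 : R) • M *ᵥ h) := by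
        simp only [hshift, AddChar.map_add_eq_mul, mul_sum]
        exact sum_comm
    _ = ∑ h, if M *ᵥ h = 0 then (Fintype.card R : ℂ) ^ Fintype.card ι * ψ (L h) else 0 := by
        refine sum_congr rfl fun h _ ↦ ?_
        simp only [AddChar.sum_dotProduct_eq_ite hψ, h2.smul_eq_zero]
        split_ifs with hh
        · simp [Q, hh, mul_comm]
        · rw [mul_zero]
    _ = _ := by
        rw [← sum_filter, mul_sum]
        exact sum_subtype _ (fun h ↦ by simp [LinearMap.mem_ker]) _

lemma Matrix.card_ker_mulVecLin {F m n : Type*} [Field F] [Fintype F] [Fintype m] [Fintype n]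
    (A : Matrix m n F) [Fintype (LinearMap.ker A.mulVecLin)] :
    Fintype.card (LinearMap.ker A.mulVecLin) = Fintype.card F ^ (Fintype.card n - A.rank) := by
  have hrank := LinearMap.finrank_range_add_finrank_ker A.mulVecLin
  rw [Module.finrank_fintype_fun_eq_card] at hrank
  rw [Module.card_eq_pow_finrank (K := F), ← hrank, rank, Nat.add_sub_cancel_left]

lemma Complex.norm_eq_rpow_of_mul_conj_eq {z : ℂ} {x : ℝ} (hx : 0 ≤ x) {a b : ℕ}
    (h : z * conj z = (x : ℂ) ^ a * (x : ℂ) ^ b) : ‖z‖ = x ^ (((a : ℝ) + b) / 2) := by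
  have hsq : ‖z‖ ^ 2 = x ^ ((a : ℝ) + b) := by
    rw [← Nat.cast_add, Real.rpow_natCast, pow_add]
    exact_mod_cast (Complex.mul_conj' z).symm.trans h
  rw [← Real.sqrt_sq (norm_nonneg z), hsq, Real.sqrt_eq_rpow, ← Real.rpow_mul hx]
  ring_nf

/-- Vanishing/absolute value of the multivariable quadratic Gauss sum
`G_p(𝒬,ℒ) = Σ_{t ∈ 𝔽_p^n} e_p(𝒬[t] + ℒ t)` where `𝒬[t] = tᵀMt` for a symmetric
matrix `M` of rank `r` with radical `V = ker M`: the sum vanishes unless `ℒ|_V = 0`,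
in which case it has absolute value `p^{n - r/2}`. -/
theorem quadratic_gauss_sum_bound (p n : ℕ) [Fact p.Prime] (hodd : p ≠ 2)
    (M : Matrix (Fin n) (Fin n) (ZMod p)) (hM : M.IsSymm)
    (L : (Fin n → ZMod p) →ₗ[ZMod p] ZMod p) :
    (¬ (∀ v, M.mulVec v = 0 → L v = 0) →
      ∑ t : Fin n → ZMod p, ePZMod p (dotProduct t (M.mulVec t) + L t) = 0) ∧
    ((∀ v, M.mulVec v = 0 → L v = 0) →
      ‖∑ t : Fin n → ZMod p, ePZMod p (dotProduct t (M.mulVec t) + L t)‖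
        = (p : ℝ) ^ ((n : ℝ) - (M.rank : ℝ) / 2)) := by
  classical
  have hψ := ZMod.isPrimitive_stdAddChar p
  have h2 : IsUnit (2 : ZMod p) := (Ring.two_ne_zero (by rwa [ZMod.ringChar_zmod_n])).isUnit
  have key := quadraticGaussSum_mul_conj hψ h2 hM L
  rw [ePZMod_eq_stdAddChar]
  change (_ → quadraticGaussSum _ M L = 0) ∧ (_ → ‖quadraticGaussSum _ M L‖ = _)
  refine ⟨fun hL ↦ ?_, fun hL ↦ ?_⟩
  · push Not at hL
    obtain ⟨v, hv, hLv⟩ := hL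
    rw [AddChar.sum_submodule_eq_zero_of_map_ne_zero hψ (LinearMap.mem_ker.2 hv) hLv,
      mul_zero] at key
    simpa using key
  · have hker : ∑ h : LinearMap.ker M.mulVecLin, ZMod.stdAddChar (L h) =
        (p : ℂ) ^ (n - M.rank) := by
      rw [sum_congr rfl fun h _ ↦ by rw [hL h h.2, AddChar.map_zero_eq_one]]
      rw [sum_const, card_univ, M.card_ker_mulVecLin, ZMod.card, Fintype.card_fin, nsmul_one,
        Nat.cast_pow]
    rw [hker, ZMod.card, Fintype.card_fin] at key
    rw [Complex.norm_eq_rpow_of_mul_conj_eq (Nat.cast_nonneg p) key,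
      Nat.cast_sub M.rank_le_width]
    ring_nf
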